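/- Let k ≥ 1 be an integer and let (ε_1,…,ε_n) be an admissible word such that the basic interval I(ε_1,…,ε_n) is full. Then x_0 := ε_1/β + ⋯ + ε_n/β^n + ε*_1/β^{n+1} + ⋯ + ε*_k/β^{n+k} + 1/β^{n+k+t_k+1} is the right endpoint (i.e. the maximum) of the basic interval I(ε_1,…,ε_n, ε*_1,…,ε*_k, 0^{t_k+1}), and x_0 lies in the interior of I(ε_1,…,ε_n). -/

import Mathlib

open MeasureTheory Filter Set

noncomputable section

/-- The β-transformation on `(0,1]`: `T_β x = βx − ⌈βx⌉ + 1`. -/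
def Tbeta (β x : ℝ) : ℝ := β * x - ⌈β * x⌉ + 1

/-- The digits of the β-expansion, 0-indexed: `eps β x n` is the `(n+1)`-st digit
`ε_{n+1}(x,β) = ⌈β T_β^n x⌉ − 1`. -/
def eps (β x : ℝ) (n : ℕ) : ℤ := ⌈β * (Tbeta β)^[n] x⌉ - 1

/-- The basic interval of order `n` containing `x`:
all `y ∈ (0,1]` whose first `n` digits agree with those of `x`. -/
def In (β x : ℝ) (n : ℕ) : Set ℝ := {y ∈ Ioc (0:ℝ) 1 | ∀ j < n, eps β y j = eps β x j}

/-- The length of a set (Lebesgue measure). -/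
def len (s : Set ℝ) : ℝ := (volume s).toReal

/-- `tseq β n = t_n`: the maximal length of the block of zero digits of the
β-expansion of `1` immediately following position `n` (digits `ε*_{n+1},…,ε*_{n+k}`). -/
def tseq (β : ℝ) (n : ℕ) : ℕ := sSup {k : ℕ | ∀ j < k, eps β 1 (n + j) = 0}

/-- `Gam β n = Γ_n = max_{1 ≤ k ≤ n} t_k`. -/
def Gam (β : ℝ) (n : ℕ) : ℕ := Finset.sup (Finset.Icc 1 n) (tseq β)

/-- `lam β = λ(β) = limsup_n Γ_n / n`. -/
def lam (β : ℝ) : ℝ := Filter.limsup (fun n : ℕ => (Gam β n : ℝ) / n) atTop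

/-- `kstar β x n = k_n^*(x)`: the smallest `k ≥ 0` such that
`(ε_{k+1}(x),…,ε_n(x)) = (ε*_1,…,ε*_{n−k})`. -/
def kstar (β x : ℝ) (n : ℕ) : ℕ := sInf {k : ℕ | ∀ i < n - k, eps β x (k + i) = eps β 1 i}

/-- `tau β x = τ(x) = limsup_n t_{n − k_n^*(x)} / n`. -/
def tau (β x : ℝ) : ℝ :=
  Filter.limsup (fun n : ℕ => (tseq β (n - kstar β x n) : ℝ) / n) atTop

/-- The upper density `\overline{D}(x) = limsup_n (−log_β |I_n(x)|)/n`. -/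
def upperD (β x : ℝ) : ℝ :=
  Filter.limsup (fun n : ℕ => -Real.logb β (len (In β x n)) / n) atTop

/-- The lower density `\underline{D}(x) = liminf_n (−log_β |I_n(x)|)/n`. -/
def lowerD (β x : ℝ) : ℝ :=
  Filter.liminf (fun n : ℕ => -Real.logb β (len (In β x n)) / n) atTop

/-- The basic interval (cylinder) associated to a finite word `w` of digits:
all `x ∈ (0,1]` whose β-expansion starts with `w`. -/
def cyl (β : ℝ) (w : List ℤ) : Set ℝ :=
  {x ∈ Ioc (0:ℝ) 1 | ∀ j < w.length, eps β x j = w.getD j 0}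

/-- A finite word is admissible if it occurs as the initial digits of some `x ∈ (0,1]`. -/
def Admissible (β : ℝ) (w : List ℤ) : Prop := (cyl β w).Nonempty

/-- A basic interval is full if its length is `β^{−n}` where `n` is the order. -/
def IsFull (β : ℝ) (w : List ℤ) : Prop := len (cyl β w) = β ^ (-(w.length : ℤ))

/-- The word `(ε*_1,…,ε*_n)` of the first `n` digits of the β-expansion of `1`. -/
def estarWord (β : ℝ) (n : ℕ) : List ℤ := (List.range n).map (eps β 1)

/-- The interior of a set relative to the subspace `[0,1]`
(for `S ⊆ [0,1]` this is exactly the interior of `S` in the topology of `[0,1]`). -/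
def intIn01 (S : Set ℝ) : Set ℝ := Icc 0 1 \ closure (Icc 0 1 \ S)

/-!
Write `S(v) = Σ_j v_j β^{-(j+1)}`. On the cylinder `I(v)` one has `T_β^{|v|} x = β^{|v|}(x - S(v))`,
and `I(v ++ v') = {x ∈ I(v) : T_β^{|v|} x ∈ I(v')}`. Cylinders are order-convex above `S(v)`, so
a cylinder of full length `β^{-n}` contains the whole open interval `(S(w), S(w) + β^{-n})`.
The block `0^m` has cylinder `(0, β^{-m}]`. Since `ε*_{k+t_k+1} ≠ 0`, `T_β^k 1 > β^{-(t_k+1)}`, so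
`u = S(ε*_1 … ε*_k) + β^{-(k+t_k+1)}` lies in `I(ε*_1 … ε*_k)`, is `< 1`, and is the maximum of
`I(ε*_1 … ε*_k 0^{t_k+1})`. Pulling back by the affine map `T_β^n` on the full cylinder `I(w)`,
`x_0 = S(w) + u β^{-n}` is the maximum of the long cylinder and lies strictly inside `I(w)`.
-/

section

variable {β x y z : ℝ} {d : ℤ} {v v' : List ℤ}

lemma Tbeta_mem_Ioc (β x : ℝ) : Tbeta β x ∈ Ioc (0 : ℝ) 1 := by
  have h₁ := Int.ceil_lt_add_one (β * x)
  have h₂ := Int.le_ceil (β * x)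
  constructor <;> · unfold Tbeta; linarith

lemma iterate_Tbeta_mem_Ioc (hx : x ∈ Ioc (0 : ℝ) 1) : ∀ j, (Tbeta β)^[j] x ∈ Ioc (0 : ℝ) 1
  | 0 => hx
  | j + 1 => by rw [Function.iterate_succ_apply']; exact Tbeta_mem_Ioc β _

lemma eps_eq_eps_iterate (β x : ℝ) (j : ℕ) : eps β x j = eps β ((Tbeta β)^[j] x) 0 := rfl

lemma Tbeta_eq (β x : ℝ) : Tbeta β x = β * x - eps β x 0 := by
  simp only [Tbeta, eps, Function.iterate_zero, id_eq]; push_cast; ring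

lemma eps_zero_eq_iff : eps β x 0 = d ↔ (d : ℝ) < β * x ∧ β * x ≤ d + 1 := by
  rw [eps, Function.iterate_zero, id_eq, sub_eq_iff_eq_add, Int.ceil_eq_iff]
  push_cast
  constructor <;> rintro ⟨h₁, h₂⟩ <;> constructor <;> linarith

lemma eps_zero_nonneg (hβ : 0 < β) (hx : 0 < x) : 0 ≤ eps β x 0 := by
  have := Int.ceil_pos.mpr (mul_pos hβ hx)
  simp only [eps, Function.iterate_zero, id_eq]
  omega

lemma one_lt_mul_of_eps_zero_ne_zero (hβ : 0 < β) (hx : 0 < x) (h : eps β x 0 ≠ 0) :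
    1 < β * x := by
  by_contra! hle
  have h₁ := Int.ceil_pos.mpr (mul_pos hβ hx)
  have h₂ : ⌈β * x⌉ ≤ 1 := Int.ceil_le.mpr (by exact_mod_cast hle)
  simp only [eps, Function.iterate_zero, id_eq] at h
  omega

lemma cyl_subset_Ioc01 (β : ℝ) (v : List ℤ) : cyl β v ⊆ Ioc 0 1 := sep_subset _ _

@[simp] lemma cyl_nil (β : ℝ) : cyl β [] = Ioc 0 1 := by ext; simp [cyl]

lemma mem_cyl_cons :
    x ∈ cyl β (d :: v) ↔ x ∈ Ioc (0 : ℝ) 1 ∧ eps β x 0 = d ∧ Tbeta β x ∈ cyl β v := by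
  simp only [cyl, mem_ofPred_eq, List.length_cons, Nat.forall_lt_succ_left, List.getD_cons_zero,
    List.getD_cons_succ, Tbeta_mem_Ioc, true_and]
  rfl

lemma mem_cyl_append :
    x ∈ cyl β (v ++ v') ↔ x ∈ cyl β v ∧ (Tbeta β)^[v.length] x ∈ cyl β v' := by
  induction v generalizing x with
  | nil => simpa using fun h => cyl_subset_Ioc01 β v' h
  | cons d v ih => simp only [List.cons_append, mem_cyl_cons, ih, and_assoc]; rfl

def wordSum (β : ℝ) (v : List ℤ) : ℝ :=
  ∑ j ∈ Finset.range v.length, (v.getD j 0 : ℝ) / β ^ (j + 1)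

@[simp] lemma wordSum_nil (β : ℝ) : wordSum β [] = 0 := by simp [wordSum]

lemma wordSum_cons (β : ℝ) (d : ℤ) (v : List ℤ) :
    wordSum β (d :: v) = (d + wordSum β v) / β := by
  simp only [wordSum, List.length_cons, Finset.sum_range_succ', List.getD_cons_succ,
    List.getD_cons_zero, add_div, Finset.sum_div, pow_succ, div_div]
  ring

lemma wordSum_nonneg_of_mem_cyl (hβ : 0 < β) (hx : x ∈ cyl β v) : 0 ≤ wordSum β v := by
  induction v generalizing x with
  | nil => simp
  | cons d v ih =>
    obtain ⟨hx01, rfl, hTx⟩ := mem_cyl_cons.mp hx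
    rw [wordSum_cons]
    have := eps_zero_nonneg hβ hx01.1
    have := ih hTx
    positivity

lemma iterate_eq_of_mem_cyl (hβ : β ≠ 0) (hx : x ∈ cyl β v) :
    (Tbeta β)^[v.length] x = β ^ v.length * (x - wordSum β v) := by
  induction v generalizing x with
  | nil => simp
  | cons d v ih =>
    obtain ⟨-, rfl, hTx⟩ := mem_cyl_cons.mp hx
    rw [List.length_cons, Function.iterate_succ_apply, ih hTx, Tbeta_eq, wordSum_cons]
    field_simp
    ring

lemma mul_sub_le_iff_le_add_div (hβ : 0 < β) (n : ℕ) {s c : ℝ} :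
    β ^ n * (x - s) ≤ c ↔ x ≤ s + c / β ^ n := by
  rw [← sub_le_iff_le_add', le_div_iff₀' (pow_pos hβ n)]

lemma cyl_subset_Ioc (hβ : 0 < β) :
    cyl β v ⊆ Ioc (wordSum β v) (wordSum β v + 1 / β ^ v.length) := by
  intro x hx
  have hT := iterate_Tbeta_mem_Ioc (cyl_subset_Ioc01 β v hx) v.length (β := β)
  rw [iterate_eq_of_mem_cyl hβ.ne' hx] at hT
  exact ⟨sub_pos.mp (pos_of_mul_pos_right hT.1 (pow_pos hβ _).le),
    (mul_sub_le_iff_le_add_div hβ _).mp hT.2⟩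

lemma mem_cyl_of_lt_of_le (hβ : 0 < β) (hy : y ∈ cyl β v) (hz : wordSum β v < z)
    (hzy : z ≤ y) : z ∈ cyl β v := by
  induction v generalizing y z with
  | nil =>
    obtain ⟨-, hy1⟩ := cyl_subset_Ioc01 β [] hy
    simp only [wordSum_nil, cyl_nil] at hz ⊢
    exact ⟨hz, hzy.trans hy1⟩
  | cons d v ih =>
    obtain ⟨⟨hy0, hy1⟩, hdy, hTy⟩ := mem_cyl_cons.mp hy
    obtain ⟨-, hβy⟩ := eps_zero_eq_iff.mp hdy
    have hd : (0 : ℝ) ≤ d := by rw [← hdy]; exact_mod_cast eps_zero_nonneg hβ hy0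
    have hS := wordSum_nonneg_of_mem_cyl hβ hTy
    rw [wordSum_cons, div_lt_iff₀' hβ] at hz
    have hdz : eps β z 0 = d := eps_zero_eq_iff.mpr ⟨by linarith, by nlinarith⟩
    refine mem_cyl_cons.mpr ⟨⟨by nlinarith, hzy.trans hy1⟩, hdz, ?_⟩
    rw [Tbeta_eq, hdy] at hTy
    rw [Tbeta_eq, hdz]
    exact ih hTy (by linarith) (by nlinarith)

lemma cyl_replicate_zero (hβ : 1 < β) (m : ℕ) :
    cyl β (List.replicate m 0) = Ioc 0 (1 / β ^ m) := by
  have hβ0 : 0 < β := zero_lt_one.trans hβ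
  induction m with
  | zero => simp
  | succ m ih =>
    ext x
    have hstep : 1 / β ^ (m + 1) = 1 / β ^ m / β := by rw [pow_succ, div_div]
    have hle : 1 / β ^ m ≤ 1 := div_le_one_of_le₀ (one_le_pow₀ hβ.le) (by positivity)
    rw [List.replicate_succ, mem_cyl_cons, ih, hstep, mem_Ioc, mem_Ioc, mem_Ioc, le_div_iff₀' hβ0]
    constructor
    · rintro ⟨⟨hx0, -⟩, h0, hT⟩
      rw [Tbeta_eq, h0, Int.cast_zero, sub_zero] at hT
      exact ⟨hx0, hT.2⟩
    · rintro ⟨hx0, hx⟩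
      have h0 : eps β x 0 = 0 := eps_zero_eq_iff.mpr (by push_cast; constructor <;> nlinarith)
      refine ⟨⟨hx0, by nlinarith⟩, h0, ?_⟩
      rw [Tbeta_eq, h0, Int.cast_zero, sub_zero]
      exact ⟨by positivity, hx⟩

lemma Ioo_subset_cyl_of_isFull (hβ : 0 < β) {w : List ℤ} (hfull : IsFull β w) :
    Ioo (wordSum β w) (wordSum β w + 1 / β ^ w.length) ⊆ cyl β w := by
  intro z hz
  by_contra hzc
  have hsub : cyl β w ⊆ Ioo (wordSum β w) z := fun y hy =>
    ⟨(cyl_subset_Ioc hβ hy).1, lt_of_not_ge fun hzy => hzc (mem_cyl_of_lt_of_le hβ hy hz.1 hzy)⟩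
  have hlen : len (cyl β w) ≤ z - wordSum β w := by
    rw [← Real.volume_real_Ioo_of_le hz.1.le]
    exact measureReal_mono hsub measure_Ioo_lt_top.ne
  rw [hfull, zpow_neg, zpow_natCast, inv_eq_one_div] at hlen
  linarith [hz.2]

lemma isGreatest_cyl_append (hβ : 0 < β) {w : List ℤ} {u : ℝ} (hu : IsGreatest (cyl β v) u)
    (hw : wordSum β w + u / β ^ w.length ∈ cyl β w) :
    IsGreatest (cyl β (w ++ v)) (wordSum β w + u / β ^ w.length) := by
  have hpow : β ^ w.length ≠ 0 := (pow_pos hβ _).ne'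
  refine ⟨mem_cyl_append.mpr ⟨hw, ?_⟩, fun x hx => ?_⟩
  · rw [iterate_eq_of_mem_cyl hβ.ne' hw, add_sub_cancel_left, mul_div_cancel₀ _ hpow]
    exact hu.1
  · obtain ⟨hxw, hT⟩ := mem_cyl_append.mp hx
    rw [iterate_eq_of_mem_cyl hβ.ne' hxw] at hT
    exact (mul_sub_le_iff_le_add_div hβ _).mp (hu.2 hT)

lemma add_div_mem_interior_cyl_of_isFull (hβ : 0 < β) {w : List ℤ} {u : ℝ} (hfull : IsFull β w)
    (hu0 : 0 < u) (hu1 : u < 1) : wordSum β w + u / β ^ w.length ∈ interior (cyl β w) := by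
  refine interior_mono (Ioo_subset_cyl_of_isFull hβ hfull) ?_
  rw [isOpen_Ioo.interior_eq]
  have hpow : 0 < β ^ w.length := pow_pos hβ _
  exact ⟨lt_add_of_pos_right _ (div_pos hu0 hpow), by gcongr⟩

lemma iterate_add_eq_pow_mul {k m : ℕ} (h : ∀ j < m, eps β x (k + j) = 0) :
    (Tbeta β)^[k + m] x = β ^ m * (Tbeta β)^[k] x := by
  induction m with
  | zero => simp
  | succ m ih =>
    rw [← add_assoc, Function.iterate_succ_apply', Tbeta_eq, ← eps_eq_eps_iterate,
      h m m.lt_succ_self, ih fun j hj => h j (hj.trans m.lt_succ_self)]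
    push_cast
    ring

lemma tseq_spec (hβ : 1 < β) (k : ℕ) :
    (∀ j < tseq β k, eps β 1 (k + j) = 0) ∧ eps β 1 (k + tseq β k) ≠ 0 := by
  set P := {m : ℕ | ∀ j < m, eps β 1 (k + j) = 0}
  have hy := iterate_Tbeta_mem_Ioc (β := β) (⟨one_pos, le_rfl⟩ : (1 : ℝ) ∈ Ioc 0 1) k
  obtain ⟨M, hM⟩ := pow_unbounded_of_one_lt ((Tbeta β)^[k] 1)⁻¹ hβ
  have hbdd : BddAbove P := by
    refine ⟨M, fun m hm => ?_⟩
    have hle : β ^ m * (Tbeta β)^[k] 1 ≤ 1 := by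
      rw [← iterate_add_eq_pow_mul hm]
      exact (iterate_Tbeta_mem_Ioc ⟨one_pos, le_rfl⟩ _).2
    rw [← le_div_iff₀ hy.1, one_div] at hle
    exact ((pow_lt_pow_iff_right₀ hβ).mp (hle.trans_lt hM)).le
  have hmem : tseq β k ∈ P := Nat.sSup_mem ⟨0, fun j hj => absurd hj j.not_lt_zero⟩ hbdd
  refine ⟨hmem, fun h0 => ?_⟩
  have hsucc : tseq β k + 1 ∈ P := fun j hj => by
    rcases Nat.lt_succ_iff_lt_or_eq.mp hj with hj | rfl
    exacts [hmem j hj, h0]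
  exact (le_csSup hbdd hsucc).not_gt (Nat.lt_succ_self _)

lemma one_div_pow_tseq_lt_iterate (hβ : 1 < β) (k : ℕ) :
    1 / β ^ (tseq β k + 1) < (Tbeta β)^[k] 1 := by
  have hβ0 : 0 < β := zero_lt_one.trans hβ
  obtain ⟨hzero, hne⟩ := tseq_spec hβ k
  have hpos := (iterate_Tbeta_mem_Ioc (β := β) ⟨one_pos, le_rfl⟩ (k + tseq β k)).1
  have h := one_lt_mul_of_eps_zero_ne_zero hβ0 hpos (by rwa [← eps_eq_eps_iterate])
  rw [iterate_add_eq_pow_mul hzero, ← mul_assoc, ← pow_succ'] at h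
  rwa [div_lt_iff₀' (pow_pos hβ0 _)]

lemma one_mem_cyl_estarWord (β : ℝ) (k : ℕ) : (1 : ℝ) ∈ cyl β (estarWord β k) :=
  ⟨⟨one_pos, le_rfl⟩, fun j hj => by simp_all [estarWord]⟩

@[simp] lemma length_estarWord (β : ℝ) (k : ℕ) : (estarWord β k).length = k := by
  simp [estarWord]

lemma wordSum_estarWord (β : ℝ) (k : ℕ) :
    wordSum β (estarWord β k) = ∑ j ∈ Finset.range k, (eps β 1 j : ℝ) / β ^ (j + 1) := by
  refine Finset.sum_congr (by simp) fun j hj => ?_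
  simp_all [estarWord]

lemma wordSum_estarWord_add_lt_one (hβ : 1 < β) (k : ℕ) :
    wordSum β (estarWord β k) + 1 / β ^ (tseq β k + 1) / β ^ k < 1 := by
  have hβ0 : 0 < β := zero_lt_one.trans hβ
  have h := one_div_pow_tseq_lt_iterate hβ k
  have hT := iterate_eq_of_mem_cyl hβ0.ne' (one_mem_cyl_estarWord β k)
  rw [length_estarWord] at hT
  rw [hT, ← div_lt_iff₀' (pow_pos hβ0 k)] at h
  linarith

lemma isGreatest_cyl_estarWord_append_replicate (hβ : 1 < β) (k : ℕ) :
    IsGreatest (cyl β (estarWord β k ++ List.replicate (tseq β k + 1) 0))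
      (wordSum β (estarWord β k) + 1 / β ^ (tseq β k + 1) / β ^ k) := by
  have hβ0 : 0 < β := zero_lt_one.trans hβ
  have hzero : IsGreatest (cyl β (List.replicate (tseq β k + 1) 0)) (1 / β ^ (tseq β k + 1)) := by
    rw [cyl_replicate_zero hβ]
    exact isGreatest_Ioc (by positivity)
  have h := isGreatest_cyl_append (w := estarWord β k) hβ0 hzero
  rw [length_estarWord] at h
  exact h (mem_cyl_of_lt_of_le hβ0 (one_mem_cyl_estarWord β k)
    (lt_add_of_pos_right _ (by positivity)) (wordSum_estarWord_add_lt_one hβ k).le)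

lemma sum_add_sum_add_one_div_eq (hβ : β ≠ 0) (w : List ℤ) (k t : ℕ) :
    (∑ j ∈ Finset.range w.length, (w.getD j 0 : ℝ) / β ^ (j + 1)) +
        (∑ j ∈ Finset.range k, (eps β 1 j : ℝ) / β ^ (w.length + j + 1)) +
        1 / β ^ (w.length + k + t + 1) =
      wordSum β w + (wordSum β (estarWord β k) + 1 / β ^ (t + 1) / β ^ k) / β ^ w.length := by
  have hsum : ∑ j ∈ Finset.range k, (eps β 1 j : ℝ) / β ^ (w.length + j + 1) =
      wordSum β (estarWord β k) / β ^ w.length := by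
    rw [wordSum_estarWord, Finset.sum_div]
    refine Finset.sum_congr rfl fun j _ => ?_
    rw [div_div, ← pow_add]
    ring_nf
  change wordSum β w + _ + _ = _
  rw [hsum]
  field_simp
  ring

lemma mem_intIn01_of_mem_interior {S : Set ℝ} (hS : S ⊆ Icc 0 1) (hx : x ∈ interior S) :
    x ∈ intIn01 S :=
  ⟨hS (interior_subset hx), fun hc => by
    simpa [closure_compl, hx] using closure_mono (sdiff_subset_compl _ _) hc⟩

end

theorem right_endpoint_in_interior_general (β : ℝ) (hβ : 1 < β) (k : ℕ)
    (w : List ℤ) (hfull : IsFull β w) :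
    IsGreatest (cyl β (w ++ estarWord β k ++ List.replicate (tseq β k + 1) 0))
        ((∑ j ∈ Finset.range w.length, (w.getD j 0 : ℝ) / β ^ (j + 1)) +
          (∑ j ∈ Finset.range k, (eps β 1 j : ℝ) / β ^ (w.length + j + 1)) +
          1 / β ^ (w.length + k + tseq β k + 1)) ∧
      ((∑ j ∈ Finset.range w.length, (w.getD j 0 : ℝ) / β ^ (j + 1)) +
          (∑ j ∈ Finset.range k, (eps β 1 j : ℝ) / β ^ (w.length + j + 1)) +
          1 / β ^ (w.length + k + tseq β k + 1)) ∈ intIn01 (cyl β w) := by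
  have hβ0 : 0 < β := zero_lt_one.trans hβ
  have hu := isGreatest_cyl_estarWord_append_replicate hβ k
  have hint := add_div_mem_interior_cyl_of_isFull hβ0 hfull (cyl_subset_Ioc01 _ _ hu.1).1
    (wordSum_estarWord_add_lt_one hβ k)
  rw [sum_add_sum_add_one_div_eq hβ0.ne', List.append_assoc]
  exact ⟨isGreatest_cyl_append hβ0 hu (interior_subset hint),
    mem_intIn01_of_mem_interior ((cyl_subset_Ioc01 β w).trans Ioc_subset_Icc_self) hint⟩

/-- Let `k ≥ 1` and let `(ε_1,…,ε_n)` be an admissible word whose basic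
interval is full. Then
`x_0 = ε_1/β + ⋯ + ε_n/β^n + ε*_1/β^{n+1} + ⋯ + ε*_k/β^{n+k} + 1/β^{n+k+t_k+1}`
is the right endpoint (the maximum) of the basic interval
`I(ε_1,…,ε_n, ε*_1,…,ε*_k, 0^{t_k+1})`, and `x_0` lies in the interior of `I(ε_1,…,ε_n)`
taken in `[0,1]`. -/
theorem right_endpoint_in_interior (β : ℝ) (hβ : 1 < β) (k : ℕ) (hk : 1 ≤ k)
    (w : List ℤ) (hadm : Admissible β w) (hfull : IsFull β w) :
    IsGreatest (cyl β (w ++ estarWord β k ++ List.replicate (tseq β k + 1) 0))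
        ((∑ j ∈ Finset.range w.length, (w.getD j 0 : ℝ) / β ^ (j + 1)) +
          (∑ j ∈ Finset.range k, (eps β 1 j : ℝ) / β ^ (w.length + j + 1)) +
          1 / β ^ (w.length + k + tseq β k + 1)) ∧
      ((∑ j ∈ Finset.range w.length, (w.getD j 0 : ℝ) / β ^ (j + 1)) +
          (∑ j ∈ Finset.range k, (eps β 1 j : ℝ) / β ^ (w.length + j + 1)) +
          1 / β ^ (w.length + k + tseq β k + 1)) ∈ intIn01 (cyl β w) :=
  right_endpoint_in_interior_general β hβ k w hfull
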